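/- arXiv:2010.14474 — 5 statements merged into one kernel-verified Lean document; each statement's English description precedes it below -/
import Mathlib

section
/- Let $n \ge 1$ and let $a_1, \ldots, a_n, b$ be nonnegative integers with $a_i \ge b$ for all $i$. Let $H$ be the $n \times n$ matrix with diagonal entries $H_{ii} = a_i$ and off-diagonal entries $H_{ij} = b$. Let $J_H \subseteq R = K[x_1,\ldots,x_n]$ be the monomial ideal generated by $x_t^{a_t}$ for $1 \le t \le n$ and by $x_i^{a_i - b} x_j^{a_j - b}$ for $1 \le i < j \le n$. Then $\dim_K(R/J_H) = \det H$. -/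
open MvPolynomial

/-!
Put `d i = a i - b`. The monomials outside the monomial ideal `J_H` form a `K`-basis of
`R ⧸ J_H`, and `x^e` lies outside `J_H` iff `e i < a i` for all `i` and `d i ≤ e i` for at most
one `i`. These exponents fill the box `∏ [0, d i)` together with, for each `i`, the slab where
only the `i`-th coordinate lies in `[d i, a i)`; so there are `∏ d + ∑ i, b ∏_{j ≠ i} d j` of
them. Since `H = diagonal d + b` (in every entry), splitting its first row as
`d 0 • e₀ + (b, …, b)` shows that `det H` obeys the same formula.
-/

open Finset Function

theorem Finsupp.isCompl_supported_compl {α : Type*} (M R : Type*) [Semiring R]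
    [AddCommMonoid M] [Module R M] (s : Set α) : IsCompl (supported M R s) (supported M R sᶜ) where
  disjoint := disjoint_supported_supported disjoint_compl_right
  codisjoint := by
    rw [codisjoint_iff, ← supported_union, Set.union_compl_self, supported_univ]

theorem Finsupp.single_add_single_le_iff {ι : Type*} {i j : ι} (hij : i ≠ j) (p q : ℕ)
    (e : ι →₀ ℕ) : single i p + single j q ≤ e ↔ p ≤ e i ∧ q ≤ e j := by
  refine ⟨fun h => ⟨?_, ?_⟩, fun ⟨hi, hj⟩ k => ?_⟩
  · simpa [hij.symm] using h i
  · simpa [hij] using h j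
  · obtain rfl | hik := eq_or_ne i k
    · simpa [hij.symm] using hi
    · obtain rfl | hjk := eq_or_ne j k
      · simpa [hik] using hj
      · simp [hik, hjk]

theorem Set.subsingleton_iff_forall_lt_notMem {ι : Type*} [LinearOrder ι] (s : Set ι) :
    s.Subsingleton ↔ ∀ ⦃i j⦄, i < j → i ∈ s → j ∉ s := by
  refine ⟨fun hs i j hij hi hj => hij.ne (hs hi hj), fun h x hx y hy => ?_⟩
  by_contra hxy
  rcases lt_or_gt_of_ne hxy with hlt | hlt
  exacts [h hlt hx hy, h hlt hy hx]

theorem ncard_forall_lt_and_subsingleton_setOf_le {ι : Type*} [Fintype ι] [DecidableEq ι]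
    (d a : ι → ℕ) (hda : d ≤ a) :
    {e : ι → ℕ | (∀ t, e t < a t) ∧ {i | d i ≤ e i}.Subsingleton}.ncard =
      ∏ i, d i + ∑ i, ∏ j, update d i (a i - d i) j := by
  set small := Fintype.piFinset fun t => range (d t)
  set large : ι → Finset (ι → ℕ) := fun i =>
    Fintype.piFinset (update (fun t => range (d t)) i (Ico (d i) (a i)))
  have hlarge : ∀ i e, e ∈ large i ↔ (d i ≤ e i ∧ e i < a i) ∧ ∀ j ≠ i, e j < d j := by
    intro i e
    simp only [large, Fintype.mem_piFinset]
    exact (forall_update_iff _ fun t s => e t ∈ s).trans (by simp)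
  have hsplit : {e : ι → ℕ | (∀ t, e t < a t) ∧ {i | d i ≤ e i}.Subsingleton} =
      ↑(small ∪ univ.biUnion large) := by
    ext e
    simp only [Set.mem_ofPred_eq, coe_union, coe_biUnion, coe_univ, Set.mem_univ,
      Set.iUnion_true, Set.mem_union, mem_coe, Set.mem_iUnion, hlarge, small,
      Fintype.mem_piFinset, mem_range]
    constructor
    · rintro ⟨hlt, hsub⟩
      rcases hsub.eq_empty_or_singleton with hempty | ⟨i, hi⟩
      · exact Or.inl fun t => not_le.mp fun h => (Set.eq_empty_iff_forall_notMem.mp hempty) t h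
      · refine Or.inr ⟨i, ⟨hi.ge rfl, hlt i⟩, fun j hj => not_le.mp fun h => hj (hi.le h)⟩
    · rintro (hsmall | ⟨i, ⟨hdi, hai⟩, hj⟩)
      · refine ⟨fun t => (hsmall t).trans_le (hda t), fun x hx => absurd hx (hsmall x).not_ge⟩
      · have hmem : ∀ j, d j ≤ e j → j = i := fun j hdj =>
          by_contra fun hji => (hj j hji).not_ge hdj
        refine ⟨fun t => ?_, fun x hx y hy => (hmem x hx).trans (hmem y hy).symm⟩
        obtain rfl | ht := eq_or_ne t i
        exacts [hai, (hj t ht).trans_le (hda t)]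
  have hdisj : Disjoint small (univ.biUnion large) := by
    simp only [disjoint_left, mem_biUnion, mem_univ, true_and, hlarge, small,
      Fintype.mem_piFinset, mem_range, not_exists]
    exact fun e hsmall i ⟨⟨hdi, _⟩, _⟩ => (hsmall i).not_ge hdi
  have hpair : ((univ : Finset ι) : Set ι).PairwiseDisjoint large := by
    intro i _ j _ hij
    simp only [onFun, disjoint_left, hlarge]
    exact fun e ⟨⟨hdi, _⟩, _⟩ ⟨_, hj⟩ => (hj i hij).not_ge hdi
  rw [hsplit, Set.ncard_coe_finset, card_union_of_disjoint hdisj, card_biUnion hpair]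
  simp [small, large, Fintype.card_piFinset, apply_update (fun _ => card)]

namespace MvPolynomial

variable {σ K : Type*} [Field K]

def standardExponents (G : Set (σ →₀ ℕ)) : Set (σ →₀ ℕ) := {e | ∀ g ∈ G, ¬g ≤ e}

theorem map_repr_span_monomial_eq_supported (G : Set (σ →₀ ℕ)) :
    ((Ideal.span ((fun s => monomial s (1 : K)) '' G)).restrictScalars K).map
      (basisMonomials σ K).repr.toLinearMap = Finsupp.supported K K (standardExponents G)ᶜ := by
  ext f
  rw [Submodule.mem_map_equiv, Submodule.restrictScalars_mem, mem_ideal_span_monomial_image,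
    Finsupp.mem_supported]
  change (∀ e ∈ f.support, ∃ g ∈ G, g ≤ e) ↔ _
  simp [standardExponents, Set.subset_def]

theorem finrank_quotient_span_monomial (G : Set (σ →₀ ℕ)) :
    Module.finrank K (MvPolynomial σ K ⧸ Ideal.span ((fun s => monomial s (1 : K)) '' G)) =
      Nat.card (standardExponents G) := by
  set J := Ideal.span ((fun s => monomial s (1 : K)) '' G)
  have e := (Submodule.Quotient.restrictScalarsEquiv K J).symm ≪≫ₗ
    Submodule.Quotient.equiv _ _ (basisMonomials σ K).repr
      (map_repr_span_monomial_eq_supported G) ≪≫ₗ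
    Submodule.quotientEquivOfIsCompl _ _
      ((Finsupp.isCompl_supported_compl K K (standardExponents G)).symm) ≪≫ₗ
    Finsupp.supportedEquivFinsupp _
  rw [e.finrank_eq, Module.finrank_eq_nat_card_basis Finsupp.basisSingleOne]

theorem mem_standardExponents_pow_union_pairs {ι : Type*} [LinearOrder ι]
    (a d : ι → ℕ) (e : ι →₀ ℕ) :
    e ∈ standardExponents (Set.range (fun t => Finsupp.single t (a t)) ∪
        {m | ∃ i j, i < j ∧ m = Finsupp.single i (d i) + Finsupp.single j (d j)}) ↔
      (∀ t, e t < a t) ∧ {i | d i ≤ e i}.Subsingleton := by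
  simp only [standardExponents, Set.mem_ofPred_eq, Set.mem_union, Set.mem_range, or_imp,
    forall_and, forall_exists_index, forall_apply_eq_imp_iff, Finsupp.single_le_iff, not_le,
    Set.subsingleton_iff_forall_lt_notMem]
  refine and_congr_right fun _ => ⟨fun h i j hij hi => ?_, fun h g i j ⟨hij, hg⟩ => ?_⟩
  · simpa [Finsupp.single_add_single_le_iff hij.ne, hi] using h _ i j ⟨hij, rfl⟩
  · rw [hg, Finsupp.single_add_single_le_iff hij.ne]
    exact fun ⟨hi, hj⟩ => (h hij hi).not_ge hj

end MvPolynomial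

namespace Matrix

variable {R : Type*} [CommRing R]

theorem det_updateRow_zero_single_diagonal_add_const {n : ℕ} (d : Fin (n + 1) → R) (b : R) :
    ((diagonal d + of fun _ _ => b).updateRow 0 (Pi.single 0 (d 0))).det =
      d 0 * (diagonal (d ∘ Fin.succ) + of fun _ _ => b).det := by
  have hminor : ((diagonal d + of fun _ _ => b).updateRow 0 (Pi.single 0 (d 0))).submatrix
      Fin.succ Fin.succ = diagonal (d ∘ Fin.succ) + of fun _ _ => b := by
    ext i j
    simp [diagonal_apply]
  rw [det_succ_row_zero, Fin.sum_univ_succ, sum_eq_zero fun j _ => by simp, Fin.succAbove_zero,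
    hminor]
  simp

theorem det_updateRow_zero_const_diagonal_add_const {n : ℕ} (d : Fin (n + 1) → R) (b : R) :
    ((diagonal d + of fun _ _ => b).updateRow 0 fun _ => b).det = b * ∏ i : Fin n, d i.succ := by
  have hB :
      (of fun i j : Fin (n + 1) => if i = 0 then b else diagonal d i j).IsUpperTriangular := by
    intro i j hji
    have : i ≠ 0 := (Fin.pos_of_ne_zero hji.ne_bot).ne'
    simpa [this] using diagonal_apply_ne d hji.ne'
  -- subtracting row `0` from the others leaves only their diagonal entries
  rw [det_eq_of_forall_row_eq_smul_add_const (fun i => if i = 0 then 0 else 1) 0 (if_pos rfl) ?_,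
    det_of_isUpperTriangular hB, Fin.prod_univ_succ]
  · simp [Fin.succ_ne_zero]
  · intro i j
    rcases eq_or_ne i 0 with rfl | hi <;> simp [updateRow_ne, *]

theorem det_diagonal_add_const {n : ℕ} (d : Fin n → R) (b : R) :
    (diagonal d + of fun _ _ => b).det = ∏ i, d i + ∑ i, ∏ j, update d i b j := by
  induction n with
  | zero => simp
  | succ n ih =>
    set M := diagonal d + of fun _ _ => b
    have hrow : M 0 = Pi.single 0 (d 0) + fun _ => b := by
      ext j; simp [M, diagonal_apply, Pi.single_apply, eq_comm]
    rw [← updateRow_eq_self M 0, hrow, det_updateRow_add,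
      det_updateRow_zero_single_diagonal_add_const, det_updateRow_zero_const_diagonal_add_const, ih]
    simp only [Fin.prod_univ_succ, Fin.sum_univ_succ, update_self,
      update_of_ne (Fin.succ_ne_zero _), update_of_ne (Fin.succ_ne_zero _).symm,
      update_apply_of_injective d (Fin.succ_injective n), comp_def, mul_add, mul_sum]
    ring

end Matrix

theorem stmt2_general (K : Type*) [Field K] (n : ℕ) (a : Fin n → ℕ) (b : ℕ)
    (ha : ∀ i, b ≤ a i)
    (H : Matrix (Fin n) (Fin n) ℤ)
    (hH : ∀ i j, H i j = if i = j then (a i : ℤ) else (b : ℤ))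
    (J : Ideal (MvPolynomial (Fin n) K))
    (hJ : J = Ideal.span
      ((Set.range fun t => (X t : MvPolynomial (Fin n) K) ^ a t) ∪
        {m | ∃ i j : Fin n, i < j ∧ m = X i ^ (a i - b) * X j ^ (a j - b)})) :
    (Module.finrank K (MvPolynomial (Fin n) K ⧸ J) : ℤ) = H.det := by
  set d : Fin n → ℕ := fun t => a t - b
  set G : Set (Fin n →₀ ℕ) := Set.range (fun t => Finsupp.single t (a t)) ∪
    {m | ∃ i j, i < j ∧ m = Finsupp.single i (d i) + Finsupp.single j (d j)}
  have hJG : J = Ideal.span ((fun s => monomial s (1 : K)) '' G) := by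
    rw [hJ, Set.image_union, ← Set.range_comp]
    congr 3
    · ext; simp [X_pow_eq_monomial]
    · ext m; simp [X_pow_eq_monomial, monomial_mul, d, eq_comm]
  have hstd : standardExponents G ≃
      {e : Fin n → ℕ | (∀ t, e t < a t) ∧ {i | d i ≤ e i}.Subsingleton} :=
    Finsupp.equivFunOnFinite.subtypeEquiv (mem_standardExponents_pow_union_pairs a d)
  have hHdiag : H = Matrix.diagonal (fun i => (d i : ℤ)) + Matrix.of fun _ _ => (b : ℤ) := by
    ext i j
    rw [hH]
    rcases eq_or_ne i j with rfl | hij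
    · simp [d, ha i]
    · simp [hij]
  rw [hJG, finrank_quotient_span_monomial, Nat.card_congr hstd, Nat.card_coe_set_eq,
    ncard_forall_lt_and_subsingleton_setOf_le d a (fun i => Nat.sub_le _ _), hHdiag,
    Matrix.det_diagonal_add_const]
  simp only [d, Nat.sub_sub_self (ha _), Nat.cast_add, Nat.cast_sum, Nat.cast_prod,
    apply_update (fun _ => (Nat.cast : ℕ → ℤ))]

theorem stmt2 (K : Type*) [Field K] (n : ℕ) (hn : 1 ≤ n) (a : Fin n → ℕ) (b : ℕ)
    (ha : ∀ i, b ≤ a i)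
    (H : Matrix (Fin n) (Fin n) ℤ)
    (hH : ∀ i j, H i j = if i = j then (a i : ℤ) else (b : ℤ))
    (J : Ideal (MvPolynomial (Fin n) K))
    (hJ : J = Ideal.span
      ((Set.range fun t => (X t : MvPolynomial (Fin n) K) ^ a t) ∪
        {m | ∃ i j : Fin n, i < j ∧ m = X i ^ (a i - b) * X j ^ (a j - b)})) :
    (Module.finrank K (MvPolynomial (Fin n) K ⧸ J) : ℤ) = H.det :=
  stmt2_general K n a b ha H hH J hJ
end

section
/- Let $R = K[x_1,\ldots,x_n]$, let $a_i \ge b \ge 1$ with $a_1 > b$, set $r = a_1 - b$, and let $J = \langle x_l^{a_l}, x_i^{a_i - b} x_j^{a_j - b} : 1 \le l \le n,\ 1 \le i < j \le n \rangle$. Then the colon ideal $(J : x_1^r)$ equals the ideal $\langle x_1^{b}, x_2^{a_2 - b}, \ldots, x_n^{a_n - b} \rangle$. -/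
/-!
Both ideals are monomial ideals, and for a monomial ideal `⟨x^s : s ∈ S⟩` the colon by a monomial
`x^e` is generated by the monomials `x^(s - e)`, with truncated subtraction of exponents. Dividing the
generators of `J` by `x₁^r` gives `x₁^b`, the pure powers `x_l^(a_l)` (`l ≠ 1`), the powers
`x_j^(a_j - b)` coming from the pairs `i = 1 < j`, and products `x_i^(a_i - b) x_j^(a_j - b)` with
`i ≠ 1`. Each of these is a multiple of one of `x₁^b, x_2^(a_2 - b), …, x_n^(a_n - b)`, and those all
occur among them.
-/

open MvPolynomial

theorem Finsupp.single_le_tsub_single {ι : Type*} {l k : ι} {p q : ℕ} {s : ι →₀ ℕ} (hlk : l ≠ k)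
    (hs : Finsupp.single l p ≤ s) : Finsupp.single l p ≤ s - Finsupp.single k q := by
  intro m
  rcases eq_or_ne l m with rfl | hm
  · simpa [Finsupp.single_eq_of_ne hlk] using hs l
  · simp [Finsupp.single_eq_of_ne' hm]

namespace MvPolynomial

variable {σ R : Type*} [CommSemiring R]

theorem span_monomial_image_mono {A B : Set (σ →₀ ℕ)} (h : ∀ a ∈ A, ∃ b ∈ B, b ≤ a) :
    Ideal.span ((fun d => monomial d (1 : R)) '' A) ≤
      Ideal.span ((fun d => monomial d (1 : R)) '' B) := by
  rw [Ideal.span_le]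
  rintro _ ⟨a, ha, rfl⟩
  obtain ⟨b, hb, hba⟩ := h a ha
  have hfactor : monomial a (1 : R) = monomial (a - b) 1 * monomial b 1 := by
    rw [monomial_mul, one_mul, tsub_add_cancel_of_le hba]
  show monomial a 1 ∈ _
  rw [hfactor]
  exact Ideal.mul_mem_left _ _ (Ideal.subset_span ⟨b, hb, rfl⟩)

theorem span_monomial_image_colon_monomial (S : Set (σ →₀ ℕ)) (e : σ →₀ ℕ) :
    (Ideal.span ((fun d => monomial d (1 : R)) '' S)).colon {monomial e 1} =
      Ideal.span ((fun d => monomial d (1 : R)) '' ((· - e) '' S)) := by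
  ext g
  simp only [Submodule.mem_colon_singleton, smul_eq_mul, mem_ideal_span_monomial_image,
    Set.exists_mem_image, tsub_le_iff_right]
  constructor
  · intro H m hm
    refine H (m + e) ?_
    rw [mem_support_iff, coeff_mul_monomial, mul_one]
    exact mem_support_iff.mp hm
  · intro H m hm
    rw [mem_support_iff, coeff_mul_monomial'] at hm
    split_ifs at hm with hem
    · rw [mul_one, ← mem_support_iff] at hm
      simpa only [tsub_add_cancel_of_le hem] using H (m - e) hm
    · exact absurd rfl hm

end MvPolynomial

section Exponents

variable {n : ℕ} (a : Fin (n + 1) → ℕ) (b : ℕ)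

def generatorExponents : Set (Fin (n + 1) →₀ ℕ) :=
  Set.range (fun l => Finsupp.single l (a l)) ∪
    {d | ∃ i j : Fin (n + 1), i < j ∧
      d = Finsupp.single i (a i - b) + Finsupp.single j (a j - b)}

def colonGeneratorExponents : Set (Fin (n + 1) →₀ ℕ) :=
  {Finsupp.single 0 b} ∪ {d | ∃ i : Fin (n + 1), i ≠ 0 ∧ d = Finsupp.single i (a i - b)}

variable {a b}

theorem exists_colonGeneratorExponents_le_tsub (ha : ∀ i, b ≤ a i) :
    ∀ s ∈ generatorExponents a b, ∃ t ∈ colonGeneratorExponents a b,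
      t ≤ s - Finsupp.single 0 (a 0 - b) := by
  rintro _ (⟨l, rfl⟩ | ⟨i, j, hij, rfl⟩)
  · rcases eq_or_ne l 0 with rfl | hl
    · refine ⟨_, Or.inl rfl, le_of_eq ?_⟩
      rw [← Finsupp.single_tsub, Nat.sub_sub_self (ha 0)]
    · exact ⟨_, Or.inr ⟨l, hl, rfl⟩,
        Finsupp.single_le_tsub_single hl (Finsupp.single_mono tsub_le_self)⟩
  · have hj : j ≠ 0 := (Fin.zero_le i |>.trans_lt hij).ne'
    rcases eq_or_ne i 0 with rfl | hi
    · exact ⟨_, Or.inr ⟨j, hj, rfl⟩, Finsupp.single_le_tsub_single hj le_add_self⟩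
    · exact ⟨_, Or.inr ⟨i, hi, rfl⟩, Finsupp.single_le_tsub_single hi le_self_add⟩

theorem colonGeneratorExponents_subset_image_tsub (ha : ∀ i, b ≤ a i) :
    colonGeneratorExponents a b ⊆
      (· - Finsupp.single 0 (a 0 - b)) '' generatorExponents a b := by
  rintro _ (rfl | ⟨i, hi, rfl⟩)
  · refine ⟨_, Or.inl ⟨0, rfl⟩, ?_⟩
    show _ - _ = _
    rw [← Finsupp.single_tsub, Nat.sub_sub_self (ha 0)]
  · refine ⟨_, Or.inr ⟨0, i, Fin.pos_of_ne_zero hi, rfl⟩, ?_⟩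
    exact add_tsub_cancel_left _ _

end Exponents

theorem stmt5_general (K : Type*) [Field K] (n : ℕ) (a : Fin (n + 1) → ℕ) (b : ℕ)
    (ha : ∀ i, b ≤ a i)
    (J : Ideal (MvPolynomial (Fin (n + 1)) K))
    (hJ : J = Ideal.span
      ((Set.range fun l => (X l : MvPolynomial (Fin (n + 1)) K) ^ a l) ∪
        {m | ∃ i j : Fin (n + 1), i < j ∧ m = X i ^ (a i - b) * X j ^ (a j - b)})) :
    Submodule.colon J (Ideal.span {(X 0 : MvPolynomial (Fin (n + 1)) K) ^ (a 0 - b)}) =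
      Ideal.span ({(X 0 : MvPolynomial (Fin (n + 1)) K) ^ b} ∪
        {m | ∃ i : Fin (n + 1), i ≠ 0 ∧ m = X i ^ (a i - b)}) := by
  have hgens : (Set.range fun l => (X l : MvPolynomial (Fin (n + 1)) K) ^ a l) ∪
      {m | ∃ i j : Fin (n + 1), i < j ∧ m = X i ^ (a i - b) * X j ^ (a j - b)} =
        (fun d => monomial d 1) '' generatorExponents a b := by
    ext p
    simp [generatorExponents, X_pow_eq_monomial, monomial_mul, -Finsupp.single_tsub, or_and_right,
      exists_or, @eq_comm _ p]
  have hcolonGens : {(X 0 : MvPolynomial (Fin (n + 1)) K) ^ b} ∪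
      {m | ∃ i : Fin (n + 1), i ≠ 0 ∧ m = X i ^ (a i - b)} =
        (fun d => monomial d 1) '' colonGeneratorExponents a b := by
    ext p
    simp [colonGeneratorExponents, X_pow_eq_monomial, -Finsupp.single_tsub, or_and_right,
      exists_or, @eq_comm _ p]
  rw [hJ, hgens, hcolonGens, Ideal.colon_span, X_pow_eq_monomial, span_monomial_image_colon_monomial]
  refine le_antisymm (span_monomial_image_mono ?_) (span_monomial_image_mono ?_)
  · rintro _ ⟨s, hs, rfl⟩
    exact exists_colonGeneratorExponents_le_tsub ha s hs
  · exact fun t ht => ⟨t, colonGeneratorExponents_subset_image_tsub ha ht, le_rfl⟩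

theorem stmt5 (K : Type*) [Field K] (n : ℕ) (a : Fin (n + 1) → ℕ) (b : ℕ)
    (hb : 1 ≤ b) (ha : ∀ i, b ≤ a i) (h1 : b < a 0)
    (J : Ideal (MvPolynomial (Fin (n + 1)) K))
    (hJ : J = Ideal.span
      ((Set.range fun l => (X l : MvPolynomial (Fin (n + 1)) K) ^ a l) ∪
        {m | ∃ i j : Fin (n + 1), i < j ∧ m = X i ^ (a i - b) * X j ^ (a j - b)})) :
    Submodule.colon J (Ideal.span {(X 0 : MvPolynomial (Fin (n + 1)) K) ^ (a 0 - b)}) =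
      Ideal.span ({(X 0 : MvPolynomial (Fin (n + 1)) K) ^ b} ∪
        {m | ∃ i : Fin (n + 1), i ≠ 0 ∧ m = X i ^ (a i - b)}) :=
  stmt5_general K n a b ha J hJ
end

section
/- Let $R$ be a polynomial ring over a field $K$, $J \subseteq R$ an ideal, and $f \in R$. If $R/J$, $R/(J:f)$ and $R/\langle J, f \rangle$ are finite-dimensional $K$-vector spaces, then $\dim_K(R/J) = \dim_K(R/(J:f)) + \dim_K(R/\langle J, f \rangle)$. -/
/-!
Multiplication by `x` identifies `R ⧸ (N : x)` with the submodule `R ∙ [x]` of `M ⧸ N`, and the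
quotient of `M ⧸ N` by that submodule is `M ⧸ (N ⊔ R ∙ x)`; dimension is additive along
`0 → R ∙ [x] → M ⧸ N → M ⧸ (N ⊔ R ∙ x) → 0`.
-/

namespace Submodule

variable {R M : Type*} [CommRing R] [AddCommGroup M] [Module R M]

theorem torsionOf_mkQ (N : Submodule R M) (x : M) :
    Ideal.torsionOf R (M ⧸ N) (N.mkQ x) = N.colon (span R {x}) := by
  ext r
  rw [Ideal.mem_torsionOf_iff, mkQ_apply, ← Quotient.mk_smul, Quotient.mk_eq_zero,
    mem_colon_span_singleton]

theorem finrank_quotient_colon_add_finrank_quotient_sup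
    (K : Type*) [Field K] [Algebra K R] [Module K M] [IsScalarTower K R M]
    (N : Submodule R M) (x : M) [FiniteDimensional K (M ⧸ N)] :
    Module.finrank K (R ⧸ N.colon (span R {x})) + Module.finrank K (M ⧸ N ⊔ span R {x}) =
      Module.finrank K (M ⧸ N) := by
  set P := span R {N.mkQ x}
  have hP : P = (span R {x}).map N.mkQ := by rw [map_span, Set.image_singleton]
  have hsub : (R ⧸ N.colon (span R {x})) ≃ₗ[K] P.restrictScalars K :=
    (quotEquivOfEq _ _ (torsionOf_mkQ N x).symm ≪≫ₗ
      Ideal.quotTorsionOfEquivSpanSingleton R (M ⧸ N) (N.mkQ x)).restrictScalars K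
  have hquot : ((M ⧸ N) ⧸ P.restrictScalars K) ≃ₗ[K] M ⧸ N ⊔ span R {x} :=
    Quotient.restrictScalarsEquiv K P ≪≫ₗ
      (quotEquivOfEq _ _ hP ≪≫ₗ quotientQuotientEquivQuotientSup N _).restrictScalars K
  rw [← (P.restrictScalars K).finrank_quotient_add_finrank, hquot.finrank_eq, hsub.finrank_eq,
    add_comm]

end Submodule

theorem stmt7_general (K : Type*) [Field K] (n : ℕ)
    (J : Ideal (MvPolynomial (Fin n) K)) (f : MvPolynomial (Fin n) K)
    (h1 : FiniteDimensional K (MvPolynomial (Fin n) K ⧸ J)) :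
    Module.finrank K (MvPolynomial (Fin n) K ⧸ J) =
      Module.finrank K (MvPolynomial (Fin n) K ⧸ Submodule.colon J (Ideal.span {f})) +
        Module.finrank K (MvPolynomial (Fin n) K ⧸ (J ⊔ Ideal.span {f})) :=
  (J.finrank_quotient_colon_add_finrank_quotient_sup K f).symm

theorem stmt7 (K : Type*) [Field K] (n : ℕ)
    (J : Ideal (MvPolynomial (Fin n) K)) (f : MvPolynomial (Fin n) K)
    (h1 : FiniteDimensional K (MvPolynomial (Fin n) K ⧸ J))
    (h2 : FiniteDimensional K
      (MvPolynomial (Fin n) K ⧸ Submodule.colon J (Ideal.span {f})))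
    (h3 : FiniteDimensional K
      (MvPolynomial (Fin n) K ⧸ (J ⊔ Ideal.span {f}))) :
    Module.finrank K (MvPolynomial (Fin n) K ⧸ J) =
      Module.finrank K (MvPolynomial (Fin n) K ⧸ Submodule.colon J (Ideal.span {f})) +
        Module.finrank K (MvPolynomial (Fin n) K ⧸ (J ⊔ Ideal.span {f})) :=
  stmt7_general K n J f h1
end

section
/- Let $M$ be an $n \times n$ real symmetric positive semidefinite matrix and let $N$ be obtained from $M$ by replacing one diagonal entry $M_{ii}$ with a real number $b \le M_{ii}$ (keeping all other entries). If $\det N > 0$, then $N$ is positive definite. -/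
/-! On the hyperplane `x i = 0` the quadratic forms of `N` and `M` agree, so the form of `N` is
nonnegative there. Two orthonormal eigenvectors of `N` with negative eigenvalues would span a plane
on which the form is negative definite, and that plane meets the hyperplane; so `N` has at most one
negative eigenvalue. Since `det N > 0` is the product of the eigenvalues, none of them vanishes and
an even number of them is negative, hence all are positive. -/

open Matrix

lemma Matrix.dotProduct_single_mulVec {n R : Type*} [Fintype n] [DecidableEq n]
    [CommSemiring R] (x : n → R) (i j : n) (c : R) : x ⬝ᵥ single i j c *ᵥ x = x i * c * x j := by
  rw [single_mulVec_eq, dotProduct_smul, dotProduct_single, smul_eq_mul]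
  ring

namespace Matrix.IsHermitian

variable {n : Type*} [Fintype n] [DecidableEq n] {A : Matrix n n ℝ} (hA : A.IsHermitian)
include hA

lemma eigenvectorBasis_dotProduct (j k : n) :
    ⇑(hA.eigenvectorBasis j) ⬝ᵥ ⇑(hA.eigenvectorBasis k) = if j = k then 1 else 0 := by
  rw [dotProduct_comm, ← (orthonormal_iff_ite.mp hA.eigenvectorBasis.orthonormal) j k]
  simp [EuclideanSpace.inner_eq_star_dotProduct]

lemma eigenvectorBasis_dotProduct_mulVec (j : n) :
    ⇑(hA.eigenvectorBasis j) ⬝ᵥ A *ᵥ ⇑(hA.eigenvectorBasis j) = hA.eigenvalues j := by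
  simp [mulVec_eigenvectorBasis, dotProduct_smul, eigenvectorBasis_dotProduct]

lemma dotProduct_mulVec_eigenvectorBasis_pair {j k : n} (hjk : j ≠ k) (s t : ℝ) :
    (s • ⇑(hA.eigenvectorBasis j) + t • ⇑(hA.eigenvectorBasis k)) ⬝ᵥ
        A *ᵥ (s • ⇑(hA.eigenvectorBasis j) + t • ⇑(hA.eigenvectorBasis k)) =
      hA.eigenvalues j * s ^ 2 + hA.eigenvalues k * t ^ 2 := by
  simp only [mulVec_add, mulVec_smul, mulVec_eigenvectorBasis, add_dotProduct, dotProduct_add,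
    smul_dotProduct, dotProduct_smul, eigenvectorBasis_dotProduct, hjk, hjk.symm, if_true,
    if_false, smul_eq_mul]
  ring

lemma subsingleton_setOf_eigenvalues_neg (a : n → ℝ)
    (ha : ∀ x, a ⬝ᵥ x = 0 → 0 ≤ x ⬝ᵥ A *ᵥ x) :
    {j | hA.eigenvalues j < 0}.Subsingleton := by
  intro j (hj : hA.eigenvalues j < 0) k (hk : hA.eigenvalues k < 0)
  by_contra hjk
  set v := ⇑(hA.eigenvectorBasis j)
  set w := ⇑(hA.eigenvectorBasis k)
  by_cases hav : a ⬝ᵥ v = 0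
  · have := ha v hav
    rw [hA.eigenvectorBasis_dotProduct_mulVec] at this
    linarith
  · have hau : a ⬝ᵥ ((a ⬝ᵥ w) • v + (-(a ⬝ᵥ v)) • w) = 0 := by
      simp only [dotProduct_add, dotProduct_smul, smul_eq_mul]
      ring
    have := ha _ hau
    rw [hA.dotProduct_mulVec_eigenvectorBasis_pair hjk] at this
    have : 0 < (a ⬝ᵥ v) ^ 2 := by positivity
    nlinarith [sq_nonneg (a ⬝ᵥ w), neg_sq (a ⬝ᵥ v)]

theorem posDef_of_det_pos (hdet : 0 < A.det) (hneg : {j | hA.eigenvalues j < 0}.Subsingleton) :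
    A.PosDef := by
  have hdet' : A.det = ∏ j, hA.eigenvalues j := by simp [hA.det_eq_prod_eigenvalues]
  have hne : ∀ j, hA.eigenvalues j ≠ 0 := fun j hj =>
    hdet.ne' (hdet' ▸ Finset.prod_eq_zero (Finset.mem_univ j) hj)
  rw [hA.posDef_iff_eigenvalues_pos]
  by_contra! ⟨j, hj⟩
  have hj : hA.eigenvalues j < 0 := hj.lt_of_ne (hne j)
  have hrest : ∀ k ∈ Finset.univ.erase j, 0 < hA.eigenvalues k := fun k hk =>
    (hne k).symm.lt_of_le <| not_lt.mp fun hk' => Finset.ne_of_mem_erase hk (hneg hk' hj)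
  have : A.det < 0 := by
    rw [hdet', ← Finset.prod_erase_mul _ _ (Finset.mem_univ j)]
    exact mul_neg_of_pos_of_neg (Finset.prod_pos hrest) hj
  linarith

end Matrix.IsHermitian

theorem stmt8_general (n : ℕ) (M N : Matrix (Fin n) (Fin n) ℝ) (i : Fin n) (b : ℝ)
    (hM : M.PosSemidef)
    (hN : ∀ k l, N k l = if k = i ∧ l = i then b else M k l)
    (hdet : 0 < N.det) : N.PosDef := by
  have hNM : N = M + single i i (b - M i i) := by
    ext k l
    by_cases h : k = i ∧ l = i
    · obtain ⟨rfl, rfl⟩ := h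
      simp [hN]
    · have h' : ¬(i = k ∧ i = l) := fun ⟨hk, hl⟩ => h ⟨hk.symm, hl.symm⟩
      simp [hN, h, h']
  have hNH : N.IsHermitian := hNM ▸ hM.isHermitian.add (by simp [IsHermitian])
  refine hNH.posDef_of_det_pos hdet <| hNH.subsingleton_setOf_eigenvalues_neg (Pi.single i 1) ?_
  intro x hx
  rw [single_one_dotProduct] at hx
  rw [hNM, add_mulVec, dotProduct_add, dotProduct_single_mulVec, hx]
  simpa using hM.dotProduct_mulVec_nonneg x

theorem stmt8 (n : ℕ) (M N : Matrix (Fin n) (Fin n) ℝ) (i : Fin n) (b : ℝ)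
    (hM : M.PosSemidef) (hb : b ≤ M i i)
    (hN : ∀ k l, N k l = if k = i ∧ l = i then b else M k l)
    (hdet : 0 < N.det) : N.PosDef :=
  stmt8_general n M N i b hM hN hdet
end

section
/- Let $M$ be an $n \times n$ Hermitian positive definite matrix with block decomposition $M = \begin{pmatrix} A & B \\ B^* & C \end{pmatrix}$ where $A$ and $C$ are square. Then $\det M = \det A \cdot \det C$ if and only if $B = 0$. -/
/-!
By the Schur complement formula, `det M = det A * det S` with `S = C - Bᴴ A⁻¹ B` positive
definite, so the equality case says `det (S + Q) = det S` for the positive semidefinite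
`Q = Bᴴ A⁻¹ B`. Conjugating by `S^{-1/2}` turns this into `det (1 + Q') = ∏ (1 + λᵢ) = 1` with
all `λᵢ ≥ 0`, hence `Q' = 0`, so `Q = 0`, and `Bᴴ A⁻¹ B = 0` forces `B = 0` since `A⁻¹` is
positive definite.
-/

open scoped ComplexOrder NNReal
open Matrix

theorem Finset.prod_one_add_eq_one_iff {ι : Type*} [Fintype ι] {x : ι → ℝ} (hx : 0 ≤ x) :
    ∏ i, (1 + x i) = 1 ↔ x = 0 := by
  lift x to ι → ℝ≥0 using hx
  have : ∏ i, (1 + x i) = 1 ↔ (1 + x) = 1 :=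
    Fintype.prod_eq_one_iff_of_one_le fun i => by simp
  rw [← NNReal.coe_eq_one, NNReal.coe_prod] at this
  simpa [funext_iff] using this

namespace Matrix

variable {𝕜 m n : Type*} [RCLike 𝕜] [Fintype m] [Fintype n]

section DecidableEq

variable [DecidableEq n]

theorem IsHermitian.det_one_add {Q : Matrix n n 𝕜} (hQ : Q.IsHermitian) :
    (1 + Q).det = ∏ i, (1 + hQ.eigenvalues i : 𝕜) := by
  conv_lhs =>
    rw [hQ.spectral_theorem, ← map_one (Unitary.conjStarAlgAut 𝕜 _ hQ.eigenvectorUnitary),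
      ← map_add]
  rw [Unitary.conjStarAlgAut_apply, det_mul_comm, ← mul_assoc]
  simp [← diagonal_one, diagonal_add]

theorem PosSemidef.eq_zero_of_det_one_add_eq_one {Q : Matrix n n 𝕜} (hQ : Q.PosSemidef)
    (h : (1 + Q).det = 1) : Q = 0 := by
  rw [← hQ.1.eigenvalues_eq_zero_iff, ← Finset.prod_one_add_eq_one_iff hQ.eigenvalues_nonneg]
  exact_mod_cast hQ.1.det_one_add.symm.trans h

open scoped MatrixOrder in
theorem PosDef.eq_zero_of_det_add_eq_det {P Q : Matrix n n 𝕜} (hP : P.PosDef)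
    (hQ : Q.PosSemidef) (h : (P + Q).det = P.det) : Q = 0 := by
  set T := CFC.sqrt P
  have hT : T.PosDef := hP.isStrictlyPositive.sqrt.posDef
  have hTT : T * T = P := CFC.sqrt_mul_sqrt_self P hP.posSemidef.nonneg
  have hTu : IsUnit T.det := hT.det_pos.ne'.isUnit
  set Q' := T⁻¹ * Q * T⁻¹
  have hQ' : Q'.PosSemidef := by simpa [hT.1.inv.eq] using hQ.conjTranspose_mul_mul_same T⁻¹
  have hQQ' : Q = T * Q' * T := by
    simp only [Q', mul_assoc, nonsing_inv_mul _ hTu, mul_one, mul_nonsing_inv_cancel_left _ _ hTu]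
  have hPQ : P + Q = T * (1 + Q') * T := by rw [hQQ', ← hTT]; noncomm_ring
  have hdet : (1 + Q').det = 1 := by
    rw [hPQ, ← hTT, det_mul, det_mul, det_mul, mul_right_comm] at h
    exact mul_left_cancel₀ (mul_ne_zero hTu.ne_zero hTu.ne_zero) (h.trans (mul_one _).symm)
  rw [hQQ', hQ'.eq_zero_of_det_one_add_eq_one hdet, mul_zero, zero_mul]

theorem PosDef.schur_complement₁₁ [DecidableEq m] {A : Matrix m m 𝕜} {B : Matrix m n 𝕜}
    {D : Matrix n n 𝕜} (hM : (fromBlocks A B Bᴴ D).PosDef) (hA : A.PosDef) :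
    (D - Bᴴ * A⁻¹ * B).PosDef := by
  let := hA.isUnit.invertible
  refine ((PosDef.fromBlocks₁₁ B D hA).mp hM.posSemidef).posDef_iff_det_ne_zero.mpr
    fun h0 => hM.det_pos.ne' ?_
  rw [det_fromBlocks₁₁, invOf_eq_nonsing_inv, h0, mul_zero]

end DecidableEq

theorem PosDef.eq_zero_of_conjTranspose_mul_mul_same_eq_zero {A : Matrix m m 𝕜} (hA : A.PosDef)
    {B : Matrix m n 𝕜} (h : Bᴴ * A * B = 0) : B = 0 := by
  refine mulVec_injective (funext fun x => ?_)
  rw [zero_mulVec]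
  by_contra hx
  have := hA.dotProduct_mulVec_pos hx
  rw [star_mulVec, dotProduct_mulVec, vecMul_vecMul, ← dotProduct_mulVec, mulVec_mulVec, h,
    zero_mulVec, dotProduct_zero] at this
  exact this.false

end Matrix

theorem stmt11 (k l : ℕ) (A : Matrix (Fin k) (Fin k) ℂ)
    (B : Matrix (Fin k) (Fin l) ℂ) (C : Matrix (Fin l) (Fin l) ℂ)
    (hM : (Matrix.fromBlocks A B B.conjTranspose C).PosDef) :
    (Matrix.fromBlocks A B B.conjTranspose C).det = A.det * C.det ↔ B = 0 := by
  have hA : A.PosDef := hM.submatrix Sum.inl_injective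
  let := hA.isUnit.invertible
  have hdet : (fromBlocks A B Bᴴ C).det = A.det * (C - Bᴴ * A⁻¹ * B).det := by
    rw [det_fromBlocks₁₁, invOf_eq_nonsing_inv]
  constructor
  · intro h
    rw [hdet] at h
    refine hA.inv.eq_zero_of_conjTranspose_mul_mul_same_eq_zero <|
      (hM.schur_complement₁₁ hA).eq_zero_of_det_add_eq_det
        (hA.inv.posSemidef.conjTranspose_mul_mul_same B) ?_
    rw [sub_add_cancel]
    exact (mul_left_cancel₀ hA.det_pos.ne' h).symm
  · rintro rfl
    simp
end
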